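/- Let P be a double histogram, let k ≥ 1, and let s be a vertex of P. If I(bd^{k−1}(s)) ≠ V(P), then d(s, bd^k(s)) = k. If I(td^{k−1}(s)) ≠ V(P), then d(s, td^k(s)) = k. -/

import Mathlib

open Classical Set

noncomputable section

/-- A *double histogram*: an `x`-monotone orthogonal polygon in general position whose
base line lies on the `x`-axis.  It is described by its bottom columns (over the
breakpoints `xs` with depths `d < 0`) and its top columns (over the breakpoints `ys`
with heights `h > 0`).  A *simple histogram* is the special case `n = 1`, where the
upper boundary is the single (base) edge at height `h 0`. -/
structure DoubleHistogram where
  m : ℕ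
  n : ℕ
  hm : 0 < m
  hn : 0 < n
  xs : Fin (m + 1) → ℝ
  ys : Fin (n + 1) → ℝ
  d : Fin m → ℝ
  h : Fin n → ℝ
  xs_mono : StrictMono xs
  ys_mono : StrictMono ys
  left_eq : ys 0 = xs 0
  right_eq : ys (Fin.last n) = xs (Fin.last m)
  d_neg : ∀ i, d i < 0
  h_pos : ∀ j, 0 < h j
  /-- general position: no three vertices on a horizontal line -/
  d_inj : Function.Injective d
  h_inj : Function.Injective h
  /-- general position: no three vertices on a vertical line -/
  gen_pos : ∀ (i : Fin (m + 1)) (j : Fin (n + 1)), xs i = ys j →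
      (i = 0 ∧ j = 0) ∨ (i = Fin.last m ∧ j = Fin.last n)

/-- Among the reals in `A`, the one of minimum absolute value
(i.e. "closest to the base line"). -/
def closestToBase (A : Set ℝ) : ℝ :=
  sSup {y | y ∈ A ∧ ∀ y' ∈ A, |y| ≤ |y'|}

/-- The leftmost point of `S` among those minimizing the distance `|y|` to the base line. -/
def leftmostLowest (S : Set (ℝ × ℝ)) : ℝ × ℝ :=
  (sInf {x | ∃ y, (x, y) ∈ S ∧ ∀ q ∈ S, |y| ≤ |q.2|},
    closestToBase {y | (sInf {x | ∃ y', (x, y') ∈ S ∧ ∀ q ∈ S, |y'| ≤ |q.2|}, y) ∈ S})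

namespace DoubleHistogram

variable (H : DoubleHistogram)

/-- The polygon `P`, as a closed region of the plane. -/
def region : Set (ℝ × ℝ) :=
  (⋃ i : Fin H.m, Icc (H.xs i.castSucc) (H.xs i.succ) ×ˢ Icc (H.d i) 0) ∪
    ⋃ j : Fin H.n, Icc (H.ys j.castSucc) (H.ys j.succ) ×ˢ Icc 0 (H.h j)

/-- The vertex set `V(P)`. -/
def verts : Set (ℝ × ℝ) :=
  (⋃ i : Fin H.m,
      ({(H.xs i.castSucc, H.d i), (H.xs i.succ, H.d i)} : Set (ℝ × ℝ))) ∪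
    ⋃ j : Fin H.n,
      ({(H.ys j.castSucc, H.h j), (H.ys j.succ, H.h j)} : Set (ℝ × ℝ))

/-- `p` and `q` are co-visible: the axis-parallel rectangle they span lies in `P`. -/
def covisible (p q : ℝ × ℝ) : Prop :=
  Icc (min p.1 q.1) (max p.1 q.1) ×ˢ Icc (min p.2 q.2) (max p.2 q.2) ⊆ H.region

lemma covisible_symm {p q : ℝ × ℝ} (hpq : H.covisible p q) : H.covisible q p := by
  unfold covisible at hpq ⊢
  rwa [min_comm q.1 p.1, max_comm q.1 p.1, min_comm q.2 p.2, max_comm q.2 p.2]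

/-- The (unweighted) visibility graph `G(P)` on the vertices of `P`. -/
def visGraph : SimpleGraph ↥H.verts where
  Adj u v := u ≠ v ∧ H.covisible ↑u ↑v
  symm := ⟨fun _ _ hu => ⟨hu.1.symm, H.covisible_symm hu.2⟩⟩
  loopless := ⟨fun _ hu => hu.1 rfl⟩

/-- The closed neighborhood `N(v)`: `v` together with the vertices it sees. -/
def Nbr (v : ℝ × ℝ) : Set (ℝ × ℝ) :=
  {w | w ∈ H.verts ∧ (w = v ∨ H.covisible v w)}

/-- The abscissa where the leftward horizontal ray from `v` hits the boundary of `P`. -/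
def lhit (v : ℝ × ℝ) : ℝ :=
  sInf {x | x ≤ v.1 ∧ Icc x v.1 ×ˢ ({v.2} : Set ℝ) ⊆ H.region}

/-- The abscissa where the rightward horizontal ray from `v` hits the boundary of `P`. -/
def rhit (v : ℝ × ℝ) : ℝ :=
  sSup {x | v.1 ≤ x ∧ Icc v.1 x ×ˢ ({v.2} : Set ℝ) ⊆ H.region}

/-- The `y`-coordinate, among the vertices of `P` with abscissa `x` lying on the same side
of the base line as `side`, of the one closest to the base line (i.e. the endpoint of the
vertical edge at `x` closer to the base line). -/
def nearY (x : ℝ) (side : ℝ) : ℝ :=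
  if side < 0 then sSup {y | y < 0 ∧ (x, y) ∈ H.verts}
  else sInf {y | 0 < y ∧ (x, y) ∈ H.verts}

/-- The left point `ℓ(v)` (double-histogram version): if the leftward ray from `v` hits the
left boundary then the hit point, otherwise the endpoint of the hit vertical edge closer to
the base line. -/
def lpt (v : ℝ × ℝ) : ℝ × ℝ :=
  if H.lhit v = H.xs 0 then (H.xs 0, v.2) else (H.lhit v, H.nearY (H.lhit v) v.2)

/-- The right point `r(v)` (double-histogram version). -/
def rpt (v : ℝ × ℝ) : ℝ × ℝ :=
  if H.rhit v = H.xs (Fin.last H.m) then (H.xs (Fin.last H.m), v.2)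
  else (H.rhit v, H.nearY (H.rhit v) v.2)

/-- The left base vertex (for a simple histogram, i.e. `n = 1`). -/
def baseL : ℝ × ℝ := (H.xs 0, H.h ⟨0, H.hn⟩)

/-- The right base vertex (for a simple histogram, i.e. `n = 1`). -/
def baseR : ℝ × ℝ := (H.xs (Fin.last H.m), H.h ⟨0, H.hn⟩)

/-- The left point `ℓ(v)` (simple-histogram version): if the leftward ray from `v` hits the
left boundary then the left base vertex, otherwise the endpoint of the hit vertical edge
closer to the base edge. -/
def lptS (v : ℝ × ℝ) : ℝ × ℝ :=
  if H.lhit v = H.xs 0 then H.baseL else (H.lhit v, H.nearY (H.lhit v) v.2)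

/-- The right point `r(v)` (simple-histogram version). -/
def rptS (v : ℝ × ℝ) : ℝ × ℝ :=
  if H.rhit v = H.xs (Fin.last H.m) then H.baseR
  else (H.rhit v, H.nearY (H.rhit v) v.2)

/-- The interval `[p, q]`: all vertices of `P` between `p` and `q`. -/
def ivl (p q : ℝ × ℝ) : Set (ℝ × ℝ) :=
  {u | u ∈ H.verts ∧ p.1 ≤ u.1 ∧ u.1 ≤ q.1}

/-- The interval `I(v) = [ℓ(v), r(v)]` of a vertex (double-histogram version). -/
def Iv (v : ℝ × ℝ) : Set (ℝ × ℝ) := H.ivl (H.lpt v) (H.rpt v)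

/-- The interval `I(v) = [ℓ(v), r(v)]` of a vertex (simple-histogram version). -/
def IvS (v : ℝ × ℝ) : Set (ℝ × ℝ) := H.ivl (H.lptS v) (H.rptS v)

/-- The corresponding vertex `cv(v)`: the unique other vertex sharing a horizontal edge
(equivalently, by general position, the `y`-coordinate) with `v`. -/
def cv (v : ℝ × ℝ) : ℝ × ℝ :=
  (sSup {x | (x, v.2) ∈ H.verts ∧ x ≠ v.1}, v.2)

/-- `v` is a left vertex: the left endpoint of its horizontal edge. -/
def IsLeftVert (v : ℝ × ℝ) : Prop :=
  (∃ i : Fin H.m, v = (H.xs i.castSucc, H.d i)) ∨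
    ∃ j : Fin H.n, v = (H.ys j.castSucc, H.h j)

/-- `v` is a right vertex: the right endpoint of its horizontal edge. -/
def IsRightVert (v : ℝ × ℝ) : Prop :=
  (∃ i : Fin H.m, v = (H.xs i.succ, H.d i)) ∨
    ∃ j : Fin H.n, v = (H.ys j.succ, H.h j)

/-- `v` is an `ℓ`-reflex vertex (a left vertex with interior angle `3π/2`). -/
def IsLReflex (v : ℝ × ℝ) : Prop :=
  (∃ i : Fin H.m, ∃ _ : 0 < (i : ℕ),
      v = (H.xs i.castSucc, H.d i) ∧
        H.d ⟨(i : ℕ) - 1, lt_of_le_of_lt (Nat.sub_le _ _) i.isLt⟩ < H.d i) ∨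
    ∃ j : Fin H.n, ∃ _ : 0 < (j : ℕ),
      v = (H.ys j.castSucc, H.h j) ∧
        H.h j < H.h ⟨(j : ℕ) - 1, lt_of_le_of_lt (Nat.sub_le _ _) j.isLt⟩

/-- `v` is an `r`-reflex vertex (a right vertex with interior angle `3π/2`). -/
def IsRReflex (v : ℝ × ℝ) : Prop :=
  (∃ i : Fin H.m, ∃ hi : (i : ℕ) + 1 < H.m,
      v = (H.xs i.succ, H.d i) ∧ H.d ⟨(i : ℕ) + 1, hi⟩ < H.d i) ∨
    ∃ j : Fin H.n, ∃ hj : (j : ℕ) + 1 < H.n,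
      v = (H.ys j.succ, H.h j) ∧ H.h j < H.h ⟨(j : ℕ) + 1, hj⟩

/-- `v` is a reflex vertex. -/
def IsReflex (v : ℝ × ℝ) : Prop := H.IsLReflex v ∨ H.IsRReflex v

/-- The near dominator `nd(s,t)`: for `t` strictly right of `s`, the rightmost vertex of
`N(s)` to the left of `t`, ties broken towards the base line (symmetric otherwise). -/
def nd (s t : ℝ × ℝ) : ℝ × ℝ :=
  if s.1 < t.1 then
    let nx := sSup {x | (∃ y, (x, y) ∈ H.Nbr s) ∧ x ≤ t.1}
    (nx, closestToBase {y | (nx, y) ∈ H.Nbr s})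
  else
    let nx := sInf {x | (∃ y, (x, y) ∈ H.Nbr s) ∧ t.1 ≤ x}
    (nx, closestToBase {y | (nx, y) ∈ H.Nbr s})

/-- The far dominator `fd(s,t)`: for `t` strictly right of `s`, the leftmost vertex of
`N(s)` to the right of `t`, ties broken towards the base line; if there is no such vertex,
the point `r(s)` (symmetric otherwise). -/
def fd (s t : ℝ × ℝ) : ℝ × ℝ :=
  if s.1 < t.1 then
    if ∃ w ∈ H.Nbr s, t.1 ≤ w.1 then
      let nx := sInf {x | (∃ y, (x, y) ∈ H.Nbr s) ∧ t.1 ≤ x}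
      (nx, closestToBase {y | (nx, y) ∈ H.Nbr s})
    else H.rpt s
  else
    if ∃ w ∈ H.Nbr s, w.1 ≤ t.1 then
      let nx := sSup {x | (∃ y, (x, y) ∈ H.Nbr s) ∧ x ≤ t.1}
      (nx, closestToBase {y | (nx, y) ∈ H.Nbr s})
    else H.lpt s

/-- The sequence `a^i(s)`: `a^0(s) = s`, and `a^i(s)` is the leftmost vertex of
`A^i(s) = {v ∈ N(s) : ℓ(v)_x < ℓ(a^{i-1}(s))_x}` (ties towards the base line),
or `a^{i-1}(s)` if `A^i(s)` is empty. -/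
def aSeq (s : ℝ × ℝ) : ℕ → ℝ × ℝ := fun k =>
  Nat.rec (motive := fun _ => ℝ × ℝ) s
    (fun _ prev =>
      let A : Set (ℝ × ℝ) := {v | v ∈ H.Nbr s ∧ (H.lpt v).1 < (H.lpt prev).1}
      if A = ∅ then prev
      else
        let ax := sInf {x | ∃ y, (x, y) ∈ A}
        (ax, closestToBase {y | (ax, y) ∈ A}))
    k

/-- The sequence `b^i(s)`: `b^0(s) = s`, and `b^i(s)` is the rightmost vertex of
`B^i(s) = {v ∈ N(s) : r(v)_x > r(b^{i-1}(s))_x}` (ties towards the base line),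
or `b^{i-1}(s)` if `B^i(s)` is empty. -/
def bSeq (s : ℝ × ℝ) : ℕ → ℝ × ℝ := fun k =>
  Nat.rec (motive := fun _ => ℝ × ℝ) s
    (fun _ prev =>
      let B : Set (ℝ × ℝ) := {v | v ∈ H.Nbr s ∧ (H.rpt prev).1 < (H.rpt v).1}
      if B = ∅ then prev
      else
        let bx := sSup {x | ∃ y, (x, y) ∈ B}
        (bx, closestToBase {y | (bx, y) ∈ B}))
    k

/-- The pair of the `k`-th bottom dominator `bd^k(s)` and `k`-th top dominator `td^k(s)`:
`bd^0(s) = td^0(s) = s`; for `k > 0`, with `I^k(s) = I(bd^{k-1}(s)) ∪ I(td^{k-1}(s))`,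
`bd^k(s)` is the leftmost vertex of `I^k(s)⁻` minimizing the distance to the base line,
and `td^k(s)` the leftmost vertex of `I^k(s)⁺` minimizing the distance to the base line;
if one of the two sets is empty, the corresponding dominator equals the other one. -/
def bdtd (s : ℝ × ℝ) : ℕ → (ℝ × ℝ) × (ℝ × ℝ) := fun k =>
  Nat.rec (motive := fun _ => (ℝ × ℝ) × (ℝ × ℝ)) (s, s)
    (fun _ p =>
      let J : Set (ℝ × ℝ) := H.Iv p.1 ∪ H.Iv p.2
      let Jm : Set (ℝ × ℝ) := {v | v ∈ J ∧ v.2 < 0}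
      let Jp : Set (ℝ × ℝ) := {v | v ∈ J ∧ 0 < v.2}
      if Jm = ∅ then (leftmostLowest Jp, leftmostLowest Jp)
      else if Jp = ∅ then (leftmostLowest Jm, leftmostLowest Jm)
      else (leftmostLowest Jm, leftmostLowest Jp))
    k

/-- The `k`-th interval `I^k(s)`: `I^0(s) = {s}` and
`I^{k+1}(s) = I(bd^k(s)) ∪ I(td^k(s))`. -/
def Ipow (s : ℝ × ℝ) : ℕ → Set (ℝ × ℝ) := fun k =>
  Nat.rec (motive := fun _ => Set (ℝ × ℝ)) {s}
    (fun k _ => H.Iv (H.bdtd s k).1 ∪ H.Iv (H.bdtd s k).2) k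

/-- `w` lies on a shortest path from `s` to `t` in the visibility graph. -/
def OnShortestPath (s t w : ↥H.verts) : Prop :=
  ∃ p : H.visGraph.Walk s t, p.length = H.visGraph.dist s t ∧ w ∈ p.support

end DoubleHistogram

/-- A routing scheme for a graph `G`: every vertex carries a binary label and a binary
routing table, and the routing function maps (link table of the current vertex, routing
table of the current vertex, label of the target, current header) to the next vertex
together with the new header. -/
structure RoutingScheme {V : Type} (G : SimpleGraph V) where
  lab : V → List Bool
  tab : V → List Bool
  route : Set (List Bool) → List Bool → List Bool → List Bool → V × List Bool

namespace RoutingScheme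

variable {V : Type} {G : SimpleGraph V} (R : RoutingScheme G)

/-- One routing step at vertex `p` with header `h`, towards the target `t`: the routing
function is applied to the link table of `p` (the labels of its closed neighborhood),
the routing table of `p`, the label of `t` and the header `h`. -/
def step (t p : V) (h : List Bool) : V × List Bool :=
  R.route (R.lab '' {w | w = p ∨ G.Adj p w}) (R.tab p) (R.lab t) h

/-- The routing sequence from `s` towards `t`, starting with the empty header. -/
def seq (s t : V) : ℕ → V × List Bool := fun k =>
  Nat.rec (motive := fun _ => V × List Bool) (s, ([] : List Bool))
    (fun _ q => R.step t q.1 q.2) k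

end RoutingScheme

/-!
The chord of a vertex `v`, the horizontal segment of `P` through `v` from `lhit v` to `rhit v`,
spans exactly the abscissae of `I(v)`. A vertex `v` of `I^j(s)` lies under the chord of the
dominator of `I^j(s)` on its side, which is no farther from the base line, so that chord contains
the chord of `v` and `I(v) ⊆ I^{j+1}(s)`; hence every vertex within `j` hops of `s` lies in
`I^j(s)`. Conversely `I^{j+1}(s)` consists of the vertices over an interval of abscissae, so a
vertex of it closest to the base line on its side has a chord spanning the whole interval and sees
the dominator of `I^j(s)` whose interval contains it: the dominators are reached in `j + 1` hops.
Finally, if `I(bd^j(s)) ≠ V(P)`, the chord of `bd^j(s)` ends at a vertex on the same side that is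
strictly closer to the base line and lies in `I^{j+1}(s)`; so `bd^{j+1}(s)` is strictly closer to
the base line than every vertex of `I^j(s)` on its side, hence not within `j` hops of `s`.
-/

lemma Icc_csInf_subset {A : Set ℝ} (hA : IsClosed A) (hbdd : BddBelow A) {a : ℝ} (ha : a ∈ A) :
    Icc (sInf {x | x ≤ a ∧ Icc x a ⊆ A}) a ⊆ A := by
  set S := {x | x ≤ a ∧ Icc x a ⊆ A}
  have hSA : S ⊆ A := fun x hx => hx.2 ⟨le_rfl, hx.1⟩
  have hS : S.Nonempty := ⟨a, le_rfl, by simpa using ha⟩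
  intro t ht
  rcases ht.1.eq_or_lt with h | h
  · rw [← h]
    exact hA.closure_subset (closure_mono hSA (csInf_mem_closure hS (hbdd.mono hSA)))
  · obtain ⟨x, hx, hxt⟩ := exists_lt_of_csInf_lt hS h
    exact hx.2 ⟨hxt.le, ht.2⟩

lemma Icc_csSup_subset {A : Set ℝ} (hA : IsClosed A) (hbdd : BddAbove A) {a : ℝ} (ha : a ∈ A) :
    Icc a (sSup {x | a ≤ x ∧ Icc a x ⊆ A}) ⊆ A := by
  set S := {x | a ≤ x ∧ Icc a x ⊆ A}
  have hSA : S ⊆ A := fun x hx => hx.2 ⟨hx.1, le_rfl⟩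
  have hS : S.Nonempty := ⟨a, le_rfl, by simpa using ha⟩
  intro t ht
  rcases ht.2.eq_or_lt with h | h
  · rw [h]
    exact hA.closure_subset (closure_mono hSA (csSup_mem_closure hS (hbdd.mono hSA)))
  · obtain ⟨x, hx, hxt⟩ := exists_lt_of_lt_csSup hS h
    exact hx.2 ⟨ht.1, hxt.le⟩

lemma csInf_le_of_Icc_subset {A : Set ℝ} (hbdd : BddBelow A) {a x : ℝ} (hx : x ≤ a)
    (h : Icc x a ⊆ A) : sInf {x | x ≤ a ∧ Icc x a ⊆ A} ≤ x :=
  csInf_le (hbdd.mono fun _ hy => hy.2 ⟨le_rfl, hy.1⟩) ⟨hx, h⟩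

lemma le_csSup_of_Icc_subset {A : Set ℝ} (hbdd : BddAbove A) {a x : ℝ} (hx : a ≤ x)
    (h : Icc a x ⊆ A) : x ≤ sSup {x | a ≤ x ∧ Icc a x ⊆ A} :=
  le_csSup (hbdd.mono fun _ hy => hy.2 ⟨hy.1, le_rfl⟩) ⟨hx, h⟩

lemma mem_uIcc_zero_of_abs_le {a b : ℝ} (hside : 0 < a ↔ 0 < b) (hab : |a| ≤ |b|) :
    a ∈ uIcc 0 b := by
  rcases le_or_gt b 0 with hb | hb
  · have ha : a ≤ 0 := not_lt.mp (mt hside.mp (not_lt.mpr hb))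
    rw [abs_of_nonpos ha, abs_of_nonpos hb] at hab
    rw [uIcc_of_ge hb]
    exact ⟨by linarith, ha⟩
  · have ha := hside.mpr hb
    rw [abs_of_pos ha, abs_of_pos hb] at hab
    rw [uIcc_of_le hb.le]
    exact ⟨ha.le, hab⟩

section Cells

variable {N : ℕ} {f : Fin (N + 1) → ℝ} {P : Fin N → Prop}

variable (f P) in
/-- A horizontal line of a histogram over the breakpoints `f`, where `P i` says that the
`i`-th column reaches the height of the line. -/
def unionCells : Set ℝ := ⋃ (i : Fin N) (_ : P i), Icc (f i.castSucc) (f i.succ)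

lemma mem_unionCells {t : ℝ} :
    t ∈ unionCells f P ↔ ∃ i, P i ∧ t ∈ Icc (f i.castSucc) (f i.succ) := by
  simp only [unionCells, mem_iUnion, exists_prop]

lemma cell_subset_unionCells {i : Fin N} (hi : P i) :
    Icc (f i.castSucc) (f i.succ) ⊆ unionCells f P :=
  fun _ ht => mem_unionCells.mpr ⟨i, hi, ht⟩

lemma exists_mem_Icc_castSucc_succ (hN : 0 < N) {t : ℝ}
    (ht : t ∈ Icc (f 0) (f (Fin.last N))) : ∃ i : Fin N, t ∈ Icc (f i.castSucc) (f i.succ) := by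
  obtain ⟨n, rfl⟩ : ∃ n, N = n + 1 := ⟨N - 1, by omega⟩
  by_contra! h
  simp only [mem_Icc, not_and, not_le] at h
  have hlt : ∀ i : Fin (n + 1), f i.succ < t := by
    intro i
    induction i using Fin.induction with
    | zero => exact h 0 ht.1
    | succ i ih => exact h i.succ (by rw [← Fin.succ_castSucc]; exact ih.le)
  exact (hlt (Fin.last n)).not_ge (by rw [Fin.succ_last]; exact ht.2)

lemma endpoint_mem_Icc (hf : Monotone f) {α β t : ℝ} {i : Fin N} {e : Fin (N + 1)}
    (he : f e ∈ Icc α β) (hi : t ∈ Icc (f i.castSucc) (f i.succ)) (ht : t ∈ Icc α β) :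
    f i.castSucc ∈ Icc α β ∨ f i.succ ∈ Icc α β := by
  by_contra! h
  have hl : f i.castSucc < f e :=
    lt_of_lt_of_le (lt_of_not_ge fun h' => h.1 ⟨h', hi.1.trans ht.2⟩) he.1
  have hr : f e < f i.succ :=
    lt_of_le_of_lt he.2 (lt_of_not_ge fun h' => h.2 ⟨ht.1.trans hi.2, h'⟩)
  exact (Fin.castSucc_lt_iff_succ_le.mp (hf.reflect_lt hl)).not_gt (hf.reflect_lt hr)

lemma Icc_subset_unionCells_of_forall (hf : Monotone f) (hN : 0 < N) {α β : ℝ}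
    (hα : f 0 ≤ α) (hβ : β ≤ f (Fin.last N)) {x₀ : ℝ} (hx₀ : x₀ ∈ Icc α β) {i₀ : Fin N}
    (hi₀ : x₀ = f i₀.castSucc ∨ x₀ = f i₀.succ)
    (hP : ∀ i : Fin N, ∀ x ∈ Icc α β, x = f i.castSucc ∨ x = f i.succ → P i) :
    Icc α β ⊆ unionCells f P := by
  obtain ⟨e, rfl⟩ : ∃ e, x₀ = f e := hi₀.elim (fun h => ⟨_, h⟩) (fun h => ⟨_, h⟩)
  intro t ht
  obtain ⟨i, hi⟩ := exists_mem_Icc_castSucc_succ hN ⟨hα.trans ht.1, ht.2.trans hβ⟩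
  refine cell_subset_unionCells ?_ hi
  exact (endpoint_mem_Icc hf hx₀ hi ht).elim (fun h => hP i _ h (Or.inl rfl))
    (fun h => hP i _ h (Or.inr rfl))

lemma exists_succ_eq_of_left_end (hf : StrictMono f) {L : ℝ} (hL : L ∈ unionCells f P)
    (h0 : f 0 < L) (hend : ∀ x < L, ¬Icc x L ⊆ unionCells f P) :
    ∃ i : Fin N, f i.succ = L ∧ ¬P i := by
  obtain ⟨j, hPj, hj⟩ := mem_unionCells.mp hL
  have hjL : f j.castSucc = L := by
    by_contra hne
    exact hend _ (lt_of_le_of_ne hj.1 hne)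
      ((Icc_subset_Icc_right hj.2).trans (cell_subset_unionCells hPj))
  obtain ⟨i, hi⟩ := (Fin.exists_succ_eq (x := j.castSucc)).mpr fun h => h0.ne (by rw [← hjL, h])
  have hiL : f i.succ = L := by rw [hi, hjL]
  refine ⟨i, hiL, fun hPi => hend (f i.castSucc) ?_ ?_⟩
  · exact hiL ▸ hf Fin.castSucc_lt_succ
  · simpa only [hiL] using cell_subset_unionCells (f := f) hPi

lemma exists_castSucc_eq_of_right_end (hf : StrictMono f) {R : ℝ} (hR : R ∈ unionCells f P)
    (hlast : R < f (Fin.last N)) (hend : ∀ x > R, ¬Icc R x ⊆ unionCells f P) :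
    ∃ i : Fin N, f i.castSucc = R ∧ ¬P i := by
  obtain ⟨j, hPj, hj⟩ := mem_unionCells.mp hR
  have hjR : f j.succ = R := by
    by_contra hne
    exact hend _ (lt_of_le_of_ne hj.2 (Ne.symm hne))
      ((Icc_subset_Icc_left hj.1).trans (cell_subset_unionCells hPj))
  obtain ⟨i, hi⟩ :=
    (Fin.exists_castSucc_eq (i := j.succ)).mpr fun h => hlast.ne (by rw [← hjR, h])
  have hiR : f i.castSucc = R := by rw [hi, hjR]
  refine ⟨i, hiR, fun hPi => hend (f i.succ) ?_ ?_⟩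
  · exact hiR ▸ hf Fin.castSucc_lt_succ
  · simpa only [hiR] using cell_subset_unionCells (f := f) hPi

lemma exists_cell_at_end (hf : StrictMono f) {L : ℝ} (hL : L ∈ unionCells f P)
    (hend : (f 0 < L ∧ ∀ x < L, ¬Icc x L ⊆ unionCells f P) ∨
      (L < f (Fin.last N) ∧ ∀ x > L, ¬Icc L x ⊆ unionCells f P)) :
    ∃ i : Fin N, (f i.castSucc = L ∨ f i.succ = L) ∧ ¬P i := by
  rcases hend with ⟨h0, hend⟩ | ⟨hlast, hend⟩
  · obtain ⟨i, hi, hPi⟩ := exists_succ_eq_of_left_end hf hL h0 hend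
    exact ⟨i, Or.inr hi, hPi⟩
  · obtain ⟨i, hi, hPi⟩ := exists_castSucc_eq_of_right_end hf hL hlast hend
    exact ⟨i, Or.inl hi, hPi⟩

end Cells

namespace DoubleHistogram

variable (H : DoubleHistogram)

def row (y : ℝ) : Set ℝ := {t | (t, y) ∈ H.region}

variable {H}

lemma mem_region_iff {p : ℝ × ℝ} : p ∈ H.region ↔
    (∃ i : Fin H.m, p.1 ∈ Icc (H.xs i.castSucc) (H.xs i.succ) ∧ p.2 ∈ Icc (H.d i) 0) ∨
      ∃ j : Fin H.n, p.1 ∈ Icc (H.ys j.castSucc) (H.ys j.succ) ∧ p.2 ∈ Icc 0 (H.h j) := by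
  simp only [region, mem_union, mem_iUnion, mem_prod]

lemma mem_verts_iff {p : ℝ × ℝ} : p ∈ H.verts ↔
    (∃ i : Fin H.m, (p.1 = H.xs i.castSucc ∨ p.1 = H.xs i.succ) ∧ p.2 = H.d i) ∨
      ∃ j : Fin H.n, (p.1 = H.ys j.castSucc ∨ p.1 = H.ys j.succ) ∧ p.2 = H.h j := by
  simp only [verts, mem_union, mem_iUnion, mem_insert_iff, mem_singleton_iff, Prod.ext_iff,
    ← or_and_right]

lemma isClosed_row (y : ℝ) : IsClosed (H.row y) :=
  ((isClosed_iUnion_of_finite fun _ => isClosed_Icc.prod isClosed_Icc).union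
    (isClosed_iUnion_of_finite fun _ => isClosed_Icc.prod isClosed_Icc)).preimage
    (continuous_id.prodMk continuous_const)

lemma fst_mem_Icc_of_mem_region {p : ℝ × ℝ} (hp : p ∈ H.region) :
    p.1 ∈ Icc (H.xs 0) (H.xs (Fin.last H.m)) := by
  rcases mem_region_iff.mp hp with ⟨i, hx, -⟩ | ⟨j, hx, -⟩
  · exact ⟨(H.xs_mono.monotone (Fin.zero_le _)).trans hx.1,
      hx.2.trans (H.xs_mono.monotone (Fin.le_last _))⟩
  · refine ⟨?_, ?_⟩
    · rw [← H.left_eq]; exact (H.ys_mono.monotone (Fin.zero_le _)).trans hx.1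
    · rw [← H.right_eq]; exact hx.2.trans (H.ys_mono.monotone (Fin.le_last _))

lemma row_subset_Icc (y : ℝ) : H.row y ⊆ Icc (H.xs 0) (H.xs (Fin.last H.m)) :=
  fun _ ht => fst_mem_Icc_of_mem_region ht

lemma mem_region_of_mem_uIcc {a y b : ℝ} (h : (a, y) ∈ H.region) (hb : b ∈ uIcc 0 y) :
    (a, b) ∈ H.region := by
  rcases mem_region_iff.mp h with ⟨i, hx, hy⟩ | ⟨j, hx, hy⟩
  · rw [uIcc_of_ge hy.2] at hb
    exact mem_region_iff.mpr (Or.inl ⟨i, hx, hy.1.trans hb.1, hb.2⟩)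
  · rw [uIcc_of_le hy.1] at hb
    exact mem_region_iff.mpr (Or.inr ⟨j, hx, hb.1, hb.2.trans hy.2⟩)

lemma row_eq_of_neg {y : ℝ} (hy : y < 0) : H.row y = unionCells H.xs (fun i => H.d i ≤ y) := by
  ext t
  simp only [row, mem_ofPred_eq, mem_region_iff, mem_unionCells, mem_Icc]
  constructor
  · rintro (⟨i, hx, hd, -⟩ | ⟨j, -, h0, -⟩)
    exacts [⟨i, hd, hx⟩, absurd h0 (not_le.mpr hy)]
  · rintro ⟨i, hd, hx⟩
    exact Or.inl ⟨i, hx, hd, hy.le⟩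

lemma row_eq_of_pos {y : ℝ} (hy : 0 < y) : H.row y = unionCells H.ys (fun j => y ≤ H.h j) := by
  ext t
  simp only [row, mem_ofPred_eq, mem_region_iff, mem_unionCells, mem_Icc]
  constructor
  · rintro (⟨i, -, -, h0⟩ | ⟨j, hx, -, hh⟩)
    exacts [absurd h0 (not_le.mpr hy), ⟨j, hh, hx⟩]
  · rintro ⟨j, hh, hx⟩
    exact Or.inr ⟨j, hx, hy.le, hh⟩

lemma verts_finite : H.verts.Finite :=
  (finite_iUnion fun _ => (finite_singleton _).insert _).union
    (finite_iUnion fun _ => (finite_singleton _).insert _)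

lemma verts_subset_region : H.verts ⊆ H.region := by
  intro v hv
  have hlt {N : ℕ} {f : Fin (N + 1) → ℝ} (hf : StrictMono f) (i : Fin N) :
      f i.castSucc ≤ f i.succ := (hf Fin.castSucc_lt_succ).le
  rcases mem_verts_iff.mp hv with ⟨i, hx | hx, hy⟩ | ⟨j, hx | hx, hy⟩ <;>
    refine mem_region_iff.mpr ?_
  · exact Or.inl ⟨i, ⟨hx.ge, hx.le.trans (hlt H.xs_mono i)⟩, hy.ge, hy.le.trans (H.d_neg i).le⟩
  · exact Or.inl ⟨i, ⟨(hlt H.xs_mono i).trans hx.ge, hx.le⟩, hy.ge, hy.le.trans (H.d_neg i).le⟩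
  · exact Or.inr ⟨j, ⟨hx.ge, hx.le.trans (hlt H.ys_mono j)⟩, hy.ge.trans' (H.h_pos j).le, hy.le⟩
  · exact Or.inr ⟨j, ⟨(hlt H.ys_mono j).trans hx.ge, hx.le⟩, hy.ge.trans' (H.h_pos j).le, hy.le⟩

lemma snd_ne_zero_of_mem_verts {v : ℝ × ℝ} (hv : v ∈ H.verts) : v.2 ≠ 0 := by
  rcases mem_verts_iff.mp hv with ⟨i, -, hy⟩ | ⟨j, -, hy⟩ <;> rw [hy]
  exacts [(H.d_neg i).ne, (H.h_pos j).ne']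

lemma exists_bot_of_mem_verts {v : ℝ × ℝ} (hv : v ∈ H.verts) (hneg : v.2 < 0) :
    ∃ i : Fin H.m, (v.1 = H.xs i.castSucc ∨ v.1 = H.xs i.succ) ∧ v.2 = H.d i := by
  refine (mem_verts_iff.mp hv).resolve_right ?_
  rintro ⟨j, -, hy⟩
  exact (H.h_pos j).not_gt (hy ▸ hneg)

lemma exists_top_of_mem_verts {v : ℝ × ℝ} (hv : v ∈ H.verts) (hpos : 0 < v.2) :
    ∃ j : Fin H.n, (v.1 = H.ys j.castSucc ∨ v.1 = H.ys j.succ) ∧ v.2 = H.h j := by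
  refine (mem_verts_iff.mp hv).resolve_left ?_
  rintro ⟨i, -, hy⟩
  exact (H.d_neg i).not_gt (hy ▸ hpos)

lemma prod_singleton_subset_region_iff {s : Set ℝ} {y : ℝ} :
    s ×ˢ ({y} : Set ℝ) ⊆ H.region ↔ s ⊆ H.row y := by
  rw [prod_singleton, image_subset_iff]
  rfl

lemma lhit_eq (v : ℝ × ℝ) : H.lhit v = sInf {x | x ≤ v.1 ∧ Icc x v.1 ⊆ H.row v.2} := by
  simp only [lhit, prod_singleton_subset_region_iff]

lemma rhit_eq (v : ℝ × ℝ) : H.rhit v = sSup {x | v.1 ≤ x ∧ Icc v.1 x ⊆ H.row v.2} := by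
  simp only [rhit, prod_singleton_subset_region_iff]

lemma lhit_le_of_Icc_subset {v : ℝ × ℝ} {x : ℝ} (hx : x ≤ v.1) (h : Icc x v.1 ⊆ H.row v.2) :
    H.lhit v ≤ x :=
  H.lhit_eq v ▸ csInf_le_of_Icc_subset (bddBelow_Icc.mono (H.row_subset_Icc _)) hx h

lemma le_rhit_of_Icc_subset {v : ℝ × ℝ} {x : ℝ} (hx : v.1 ≤ x) (h : Icc v.1 x ⊆ H.row v.2) :
    x ≤ H.rhit v :=
  H.rhit_eq v ▸ le_csSup_of_Icc_subset (bddAbove_Icc.mono (H.row_subset_Icc _)) hx h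

lemma lhit_le_and_le_rhit {v : ℝ × ℝ} {α β : ℝ} (hv : v.1 ∈ Icc α β)
    (h : Icc α β ⊆ H.row v.2) : H.lhit v ≤ α ∧ β ≤ H.rhit v :=
  ⟨lhit_le_of_Icc_subset hv.1 ((Icc_subset_Icc_right hv.2).trans h),
    le_rhit_of_Icc_subset hv.2 ((Icc_subset_Icc_left hv.1).trans h)⟩

lemma lhit_le {v : ℝ × ℝ} (hv : v ∈ H.region) : H.lhit v ≤ v.1 :=
  (lhit_le_and_le_rhit ⟨le_rfl, le_rfl⟩ (by rw [Icc_self, singleton_subset_iff]; exact hv)).1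

lemma le_rhit {v : ℝ × ℝ} (hv : v ∈ H.region) : v.1 ≤ H.rhit v :=
  (lhit_le_and_le_rhit ⟨le_rfl, le_rfl⟩ (by rw [Icc_self, singleton_subset_iff]; exact hv)).2

lemma Icc_lhit_rhit_subset_row {v : ℝ × ℝ} (hv : v ∈ H.region) :
    Icc (H.lhit v) (H.rhit v) ⊆ H.row v.2 := by
  rw [← Icc_union_Icc_eq_Icc (lhit_le hv) (le_rhit hv), lhit_eq, rhit_eq]
  exact union_subset
    (Icc_csInf_subset (H.isClosed_row _) (bddBelow_Icc.mono (H.row_subset_Icc _)) hv)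
    (Icc_csSup_subset (H.isClosed_row _) (bddAbove_Icc.mono (H.row_subset_Icc _)) hv)

lemma xs_zero_le_lhit_and_rhit_le {v : ℝ × ℝ} (hv : v ∈ H.region) :
    H.xs 0 ≤ H.lhit v ∧ H.rhit v ≤ H.xs (Fin.last H.m) := by
  have h := (Icc_lhit_rhit_subset_row hv).trans (H.row_subset_Icc v.2)
  have hle := (lhit_le hv).trans (le_rhit hv)
  exact ⟨(h ⟨le_rfl, hle⟩).1, (h ⟨hle, le_rfl⟩).2⟩

lemma not_Icc_subset_row_of_lt_lhit {v : ℝ × ℝ} (hv : v ∈ H.region) {x : ℝ}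
    (hx : x < H.lhit v) : ¬Icc x (H.lhit v) ⊆ H.row v.2 := fun h =>
  hx.not_ge <| lhit_le_of_Icc_subset (hx.le.trans (lhit_le hv)) <| by
    rw [← Icc_union_Icc_eq_Icc hx.le (lhit_le hv)]
    exact union_subset h ((Icc_subset_Icc_right (le_rhit hv)).trans (Icc_lhit_rhit_subset_row hv))

lemma not_Icc_subset_row_of_rhit_lt {v : ℝ × ℝ} (hv : v ∈ H.region) {x : ℝ}
    (hx : H.rhit v < x) : ¬Icc (H.rhit v) x ⊆ H.row v.2 := fun h =>
  hx.not_ge <| le_rhit_of_Icc_subset ((le_rhit hv).trans hx.le) <| by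
    rw [← Icc_union_Icc_eq_Icc (le_rhit hv) hx.le]
    exact union_subset ((Icc_subset_Icc_left (lhit_le hv)).trans (Icc_lhit_rhit_subset_row hv)) h

lemma mem_Iv_iff {v w : ℝ × ℝ} :
    w ∈ H.Iv v ↔ w ∈ H.verts ∧ w.1 ∈ Icc (H.lhit v) (H.rhit v) := by
  have hl : (H.lpt v).1 = H.lhit v := by unfold lpt; split_ifs with h <;> simp [h]
  have hr : (H.rpt v).1 = H.rhit v := by unfold rpt; split_ifs with h <;> simp [h]
  simp only [Iv, ivl, mem_ofPred_eq, hl, hr, mem_Icc]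

lemma Iv_subset_verts (v : ℝ × ℝ) : H.Iv v ⊆ H.verts := fun _ hw => (mem_Iv_iff.mp hw).1

lemma mem_Iv_self {v : ℝ × ℝ} (hv : v ∈ H.verts) : v ∈ H.Iv v :=
  mem_Iv_iff.mpr ⟨hv, lhit_le (H.verts_subset_region hv), le_rhit (H.verts_subset_region hv)⟩

lemma mem_Iv_of_covisible {u w : ℝ × ℝ} (hw : w ∈ H.verts) (huw : H.covisible u w) :
    w ∈ H.Iv u := by
  have hrow : Icc (min u.1 w.1) (max u.1 w.1) ⊆ H.row u.2 := fun t ht =>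
    huw ⟨ht, min_le_left _ _, le_max_left _ _⟩
  obtain ⟨hl, hr⟩ := lhit_le_and_le_rhit ⟨min_le_left _ _, le_max_left _ _⟩ hrow
  exact mem_Iv_iff.mpr ⟨hw, hl.trans (min_le_right _ _), (le_max_right _ _).trans hr⟩

lemma covisible_of_Icc_subset_rows {p q : ℝ × ℝ}
    (h : Icc (min p.1 q.1) (max p.1 q.1) ⊆ H.row p.2 ∩ H.row q.2) : H.covisible p q := by
  rintro ⟨a, b⟩ ⟨ha, hb⟩
  rcases uIcc_subset_uIcc_union_uIcc (b := 0) hb with hb | hb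
  · exact mem_region_of_mem_uIcc (h ha).1 (uIcc_comm p.2 0 ▸ hb)
  · exact mem_region_of_mem_uIcc (h ha).2 hb

lemma Icc_subset_row_of_closest {v : ℝ × ℝ} (hv : v ∈ H.verts) {α β : ℝ} (hα : H.xs 0 ≤ α)
    (hβ : β ≤ H.xs (Fin.last H.m)) (hvαβ : v.1 ∈ Icc α β)
    (hclose : ∀ z ∈ H.verts, z.1 ∈ Icc α β → (0 < z.2 ↔ 0 < v.2) → |v.2| ≤ |z.2|) :
    Icc α β ⊆ H.row v.2 := by
  rcases (snd_ne_zero_of_mem_verts hv).lt_or_gt with hneg | hpos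
  · obtain ⟨i₀, hx₀, -⟩ := exists_bot_of_mem_verts hv hneg
    rw [row_eq_of_neg hneg]
    refine Icc_subset_unionCells_of_forall H.xs_mono.monotone H.hm hα hβ hvαβ hx₀
      fun i x hx hxi => ?_
    have hd := H.d_neg i
    have := hclose (x, H.d i) (mem_verts_iff.mpr (Or.inl ⟨i, hxi, rfl⟩)) hx
      (iff_of_false hd.not_gt hneg.not_gt)
    rw [abs_of_neg hneg, abs_of_neg hd] at this
    linarith
  · obtain ⟨j₀, hx₀, -⟩ := exists_top_of_mem_verts hv hpos
    rw [row_eq_of_pos hpos]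
    rw [← H.left_eq] at hα
    rw [← H.right_eq] at hβ
    refine Icc_subset_unionCells_of_forall H.ys_mono.monotone H.hn hα hβ hvαβ hx₀
      fun j x hx hxj => ?_
    have hh := H.h_pos j
    have := hclose (x, H.h j) (mem_verts_iff.mpr (Or.inr ⟨j, hxj, rfl⟩)) hx
      (iff_of_true hh hpos)
    rwa [abs_of_pos hpos, abs_of_pos hh] at this

lemma exists_closer_vertex {v : ℝ × ℝ} (hv : v ∈ H.verts) {L : ℝ} (hL : L ∈ H.row v.2)
    (hend : (H.xs 0 < L ∧ ∀ x < L, ¬Icc x L ⊆ H.row v.2) ∨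
      (L < H.xs (Fin.last H.m) ∧ ∀ x > L, ¬Icc L x ⊆ H.row v.2)) :
    ∃ b ∈ H.verts, b.1 = L ∧ (0 < b.2 ↔ 0 < v.2) ∧ |b.2| < |v.2| := by
  rcases (snd_ne_zero_of_mem_verts hv).lt_or_gt with hneg | hpos
  · rw [row_eq_of_neg hneg] at hL hend
    obtain ⟨i, hi, hdi⟩ := exists_cell_at_end H.xs_mono hL hend
    have hd := H.d_neg i
    refine ⟨(L, H.d i), mem_verts_iff.mpr (Or.inl ⟨i, hi.imp Eq.symm Eq.symm, rfl⟩), rfl,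
      iff_of_false hd.not_gt hneg.not_gt, ?_⟩
    rw [abs_of_neg hneg, abs_of_neg hd]
    linarith [not_le.mp hdi]
  · rw [row_eq_of_pos hpos] at hL
    rw [row_eq_of_pos hpos, ← H.left_eq, ← H.right_eq] at hend
    obtain ⟨j, hj, hhj⟩ := exists_cell_at_end H.ys_mono hL hend
    have hh := H.h_pos j
    refine ⟨(L, H.h j), mem_verts_iff.mpr (Or.inr ⟨j, hj.imp Eq.symm Eq.symm, rfl⟩), rfl,
      iff_of_true hh hpos, ?_⟩
    rw [abs_of_pos hpos, abs_of_pos hh]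
    exact not_le.mp hhj

lemma exists_closer_mem_Iv {v : ℝ × ℝ} (hv : v ∈ H.verts) (hne : H.Iv v ≠ H.verts) :
    ∃ b ∈ H.Iv v, (0 < b.2 ↔ 0 < v.2) ∧ |b.2| < |v.2| := by
  have hreg := H.verts_subset_region hv
  have hIv := Icc_lhit_rhit_subset_row hreg
  have hle := (lhit_le hreg).trans (le_rhit hreg)
  obtain ⟨L, hL, hend⟩ : ∃ L ∈ Icc (H.lhit v) (H.rhit v),
      (H.xs 0 < L ∧ ∀ x < L, ¬Icc x L ⊆ H.row v.2) ∨
        (L < H.xs (Fin.last H.m) ∧ ∀ x > L, ¬Icc L x ⊆ H.row v.2) := by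
    by_cases hl : H.xs 0 < H.lhit v
    · exact ⟨_, ⟨le_rfl, hle⟩, Or.inl ⟨hl, fun x hx => not_Icc_subset_row_of_lt_lhit hreg hx⟩⟩
    by_cases hr : H.rhit v < H.xs (Fin.last H.m)
    · exact ⟨_, ⟨hle, le_rfl⟩, Or.inr ⟨hr, fun x hx => not_Icc_subset_row_of_rhit_lt hreg hx⟩⟩
    refine absurd (Subset.antisymm (Iv_subset_verts v) fun z hz => ?_) hne
    have hz1 := fst_mem_Icc_of_mem_region (H.verts_subset_region hz)
    exact mem_Iv_iff.mpr ⟨hz, (not_lt.mp hl).trans hz1.1, hz1.2.trans (not_lt.mp hr)⟩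
  obtain ⟨b, hb, rfl, hside, hlt⟩ := exists_closer_vertex hv (hIv hL) hend
  exact ⟨b, mem_Iv_iff.mpr ⟨hb, hL⟩, hside, hlt⟩

def IsClosestToBase (S : Set (ℝ × ℝ)) (v : ℝ × ℝ) : Prop :=
  v ∈ S ∧ ∀ z ∈ S, (0 < z.2 ↔ 0 < v.2) → |v.2| ≤ |z.2|

/-- `top` encodes a side of the base line (above it iff `top` holds): `bd^k(s)` and `td^k(s)`
are dominators of `I^k(s)` for `top = False` and `top = True`. -/
def IsDominator (top : Prop) (S : Set (ℝ × ℝ)) (v : ℝ × ℝ) : Prop :=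
  IsClosestToBase S v ∧ ∀ z ∈ S, (0 < z.2 ↔ top) → (0 < v.2 ↔ top)

lemma IsClosestToBase.mono {S S' : Set (ℝ × ℝ)} {v : ℝ × ℝ} (h : IsClosestToBase S' v)
    (hv : v ∈ S) (hS : S ⊆ S') : IsClosestToBase S v :=
  ⟨hv, fun z hz => h.2 z (hS hz)⟩

lemma IsDominator.iff_of_mem {top : Prop} {S : Set (ℝ × ℝ)} {v z : ℝ × ℝ}
    (h : IsDominator top S v) (hz : z ∈ S) (hzt : 0 < z.2 ↔ top) : 0 < v.2 ↔ 0 < z.2 :=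
  (h.2 z hz hzt).trans hzt.symm

lemma IsDominator.notMem_of_abs_lt {top : Prop} {S S' : Set (ℝ × ℝ)} {u u' b : ℝ × ℝ}
    (hu : IsDominator top S u) (hu' : IsDominator top S' u') (hb : b ∈ S')
    (hbu : 0 < b.2 ↔ 0 < u.2) (hlt : |b.2| < |u.2|) : u' ∉ S := by
  intro hu'S
  -- `u'` lies on the side of `u`: either that side is `top`, and `b` puts `u'` there too, or
  -- `S` misses the side `top`, and so does `u' ∈ S`.
  have hside : 0 < u'.2 ↔ 0 < u.2 := by
    by_cases h : 0 < u.2 ↔ top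
    · exact (hu'.2 b hb (hbu.trans h)).trans h.symm
    · have := mt (hu.2 u' hu'S) h
      tauto
  have h₁ := hu.1.2 u' hu'S hside
  have h₂ := hu'.1.2 b hb (hbu.trans hside.symm)
  linarith

lemma covisible_of_isClosestToBase {u x : ℝ × ℝ} (hu : u ∈ H.verts)
    (hx : IsClosestToBase (H.Iv u) x) : H.covisible u x := by
  have hreg := H.verts_subset_region hu
  obtain ⟨hxV, hxu⟩ := mem_Iv_iff.mp hx.1
  have hsub : Icc (min u.1 x.1) (max u.1 x.1) ⊆ Icc (H.lhit u) (H.rhit u) :=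
    Icc_subset_Icc (le_min (lhit_le hreg) hxu.1) (max_le (le_rhit hreg) hxu.2)
  have hbounds := xs_zero_le_lhit_and_rhit_le hreg
  refine covisible_of_Icc_subset_rows fun t ht => ⟨Icc_lhit_rhit_subset_row hreg (hsub ht), ?_⟩
  exact Icc_subset_row_of_closest hxV (hbounds.1.trans (hsub ⟨le_rfl, min_le_max⟩).1)
    ((hsub ⟨min_le_max, le_rfl⟩).2.trans hbounds.2) ⟨min_le_right _ _, le_max_right _ _⟩
    (fun z hz hzt hside => hx.2 z (mem_Iv_iff.mpr ⟨hz, hsub hzt⟩) hside) ht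

lemma Iv_subset_Iv {u v : ℝ × ℝ} (hu : u ∈ H.verts) (hv : v ∈ H.verts) (hvu : v ∈ H.Iv u)
    (hside : 0 < u.2 ↔ 0 < v.2) (habs : |u.2| ≤ |v.2|) : H.Iv v ⊆ H.Iv u := by
  have hu' := H.verts_subset_region hu
  have hv' := H.verts_subset_region hv
  have hvu1 := (mem_Iv_iff.mp hvu).2
  have hlow : Icc (H.lhit v) (H.rhit v) ⊆ H.row u.2 := fun t ht =>
    mem_region_of_mem_uIcc (Icc_lhit_rhit_subset_row hv' ht) (mem_uIcc_zero_of_abs_le hside habs)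
  have hrow := union_subset (Icc_lhit_rhit_subset_row hu') hlow
  rw [Icc_union_Icc' ((lhit_le hv').trans hvu1.2) (hvu1.1.trans (le_rhit hv'))] at hrow
  obtain ⟨hl, hr⟩ := lhit_le_and_le_rhit ⟨(min_le_left _ _).trans (lhit_le hu'),
    (le_rhit hu').trans (le_max_left _ _)⟩ hrow
  intro w hw
  obtain ⟨hwV, hw1⟩ := mem_Iv_iff.mp hw
  exact mem_Iv_iff.mpr ⟨hwV, (hl.trans (min_le_right _ _)).trans hw1.1,
    hw1.2.trans ((le_max_right _ _).trans hr)⟩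

lemma union_Iv_subset_Iv {u w c x : ℝ × ℝ} (hu : u ∈ H.verts) (hw : w ∈ H.verts)
    (hc : c ∈ H.Iv u ∩ H.Iv w) (hx : IsClosestToBase (H.Iv u ∪ H.Iv w) x) :
    H.Iv u ∪ H.Iv w ⊆ H.Iv x := by
  obtain ⟨-, hcu⟩ := mem_Iv_iff.mp hc.1
  obtain ⟨-, hcw⟩ := mem_Iv_iff.mp hc.2
  have hunion : ∀ z, z ∈ H.Iv u ∪ H.Iv w ↔ z ∈ H.verts ∧
      z.1 ∈ Icc (min (H.lhit u) (H.lhit w)) (max (H.rhit u) (H.rhit w)) := by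
    intro z
    rw [← Icc_union_Icc' (hcw.1.trans hcu.2) (hcu.1.trans hcw.2), mem_union, mem_Iv_iff,
      mem_Iv_iff, mem_union, and_or_left]
  obtain ⟨hxV, hx1⟩ := (hunion x).mp hx.1
  have hbu := xs_zero_le_lhit_and_rhit_le (H.verts_subset_region hu)
  have hbw := xs_zero_le_lhit_and_rhit_le (H.verts_subset_region hw)
  obtain ⟨hl, hr⟩ := lhit_le_and_le_rhit hx1 <| Icc_subset_row_of_closest hxV
    (le_min hbu.1 hbw.1) (max_le hbu.2 hbw.2) hx1 fun z hz hz1 => hx.2 z ((hunion z).mpr ⟨hz, hz1⟩)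
  intro z hz
  obtain ⟨hzV, hz1⟩ := (hunion z).mp hz
  exact mem_Iv_iff.mpr ⟨hzV, hl.trans hz1.1, hz1.2.trans hr⟩

end DoubleHistogram

lemma leftmostLowest_mem_and_le {S : Set (ℝ × ℝ)} (hfin : S.Finite) (hne : S.Nonempty)
    (hsign : (∀ q ∈ S, q.2 < 0) ∨ ∀ q ∈ S, 0 < q.2) :
    leftmostLowest S ∈ S ∧ ∀ q ∈ S, |(leftmostLowest S).2| ≤ |q.2| := by
  set M := {x | ∃ y, (x, y) ∈ S ∧ ∀ q ∈ S, |y| ≤ |q.2|}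
  obtain ⟨q₀, hq₀, hq₀min⟩ := exists_min_image S (fun q => |q.2|) hfin hne
  have hM : M.Nonempty := ⟨q₀.1, q₀.2, hq₀, hq₀min⟩
  have hMfin : M.Finite := (hfin.image Prod.fst).subset fun x ⟨y, hy, _⟩ => ⟨(x, y), hy, rfl⟩
  obtain ⟨y₁, hy₁, hy₁min⟩ := hM.csInf_mem hMfin
  have habs_inj : ∀ y ∈ {y | (sInf M, y) ∈ S}, |y| = |y₁| → y = y₁ := by
    intro y hy h
    rcases hsign with hs | hs
    · rw [abs_of_neg (hs _ hy), abs_of_neg (hs _ hy₁)] at h; linarith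
    · rwa [abs_of_pos (hs _ hy), abs_of_pos (hs _ hy₁)] at h
  have hclosest : closestToBase {y | (sInf M, y) ∈ S} = y₁ := by
    have hset : {y | y ∈ {y | (sInf M, y) ∈ S} ∧ ∀ y' ∈ {y | (sInf M, y) ∈ S}, |y| ≤ |y'|} =
        {y₁} := eq_singleton_iff_unique_mem.mpr ⟨⟨hy₁, fun y hy => hy₁min _ hy⟩,
          fun y hy => habs_inj y hy.1 (le_antisymm (hy.2 y₁ hy₁) (hy₁min _ hy.1))⟩
    rw [closestToBase, hset, csSup_singleton]
  change (sInf M, closestToBase {y | (sInf M, y) ∈ S}) ∈ S ∧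
    ∀ q ∈ S, |closestToBase {y | (sInf M, y) ∈ S}| ≤ |q.2|
  rw [hclosest]
  exact ⟨hy₁, hy₁min⟩

namespace DoubleHistogram

variable {H : DoubleHistogram}

lemma isClosestToBase_leftmostLowest_neg {J : Set (ℝ × ℝ)} (hJ : J ⊆ H.verts)
    (hne : {v | v ∈ J ∧ v.2 < 0}.Nonempty) :
    IsClosestToBase J (leftmostLowest {v | v ∈ J ∧ v.2 < 0}) ∧
      (leftmostLowest {v | v ∈ J ∧ v.2 < 0}).2 < 0 := by
  obtain ⟨⟨hmem, hneg⟩, hmin⟩ := leftmostLowest_mem_and_le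
    (H.verts_finite.subset fun v hv => hJ hv.1) hne (Or.inl fun q hq => hq.2)
  refine ⟨⟨hmem, fun z hz hside => hmin z ⟨hz, ?_⟩⟩, hneg⟩
  exact (not_lt.mp (mt hside.mp hneg.not_gt)).lt_of_ne (snd_ne_zero_of_mem_verts (hJ hz))

lemma isClosestToBase_leftmostLowest_pos {J : Set (ℝ × ℝ)} (hJ : J ⊆ H.verts)
    (hne : {v | v ∈ J ∧ 0 < v.2}.Nonempty) :
    IsClosestToBase J (leftmostLowest {v | v ∈ J ∧ 0 < v.2}) ∧
      0 < (leftmostLowest {v | v ∈ J ∧ 0 < v.2}).2 := by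
  obtain ⟨⟨hmem, hpos⟩, hmin⟩ := leftmostLowest_mem_and_le
    (H.verts_finite.subset fun v hv => hJ hv.1) hne (Or.inr fun q hq => hq.2)
  exact ⟨⟨hmem, fun z hz hside => hmin z ⟨hz, hside.mpr hpos⟩⟩, hpos⟩

lemma bdtd_succ (s : ℝ × ℝ) (k : ℕ) : H.bdtd s (k + 1) =
    if {v | v ∈ H.Ipow s (k + 1) ∧ v.2 < 0} = ∅ then
      (leftmostLowest {v | v ∈ H.Ipow s (k + 1) ∧ 0 < v.2},
        leftmostLowest {v | v ∈ H.Ipow s (k + 1) ∧ 0 < v.2})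
    else if {v | v ∈ H.Ipow s (k + 1) ∧ 0 < v.2} = ∅ then
      (leftmostLowest {v | v ∈ H.Ipow s (k + 1) ∧ v.2 < 0},
        leftmostLowest {v | v ∈ H.Ipow s (k + 1) ∧ v.2 < 0})
    else
      (leftmostLowest {v | v ∈ H.Ipow s (k + 1) ∧ v.2 < 0},
        leftmostLowest {v | v ∈ H.Ipow s (k + 1) ∧ 0 < v.2}) := rfl

lemma Ipow_subset_verts (s : ↥H.verts) : ∀ k, H.Ipow s k ⊆ H.verts
  | 0 => singleton_subset_iff.mpr s.2
  | _ + 1 => union_subset (Iv_subset_verts _) (Iv_subset_verts _)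

lemma isDominator_singleton {top : Prop} (v : ℝ × ℝ) : IsDominator top {v} v :=
  ⟨⟨rfl, fun _ hz _ => hz ▸ le_rfl⟩, fun _ hz h => hz ▸ h⟩

lemma isDominator_bdtd_succ (s : ↥H.verts) (k : ℕ) (hne : (H.Ipow s (k + 1)).Nonempty) :
    IsDominator False (H.Ipow s (k + 1)) (H.bdtd s (k + 1)).1 ∧
      IsDominator True (H.Ipow s (k + 1)) (H.bdtd s (k + 1)).2 := by
  have hJ := Ipow_subset_verts s (k + 1)
  rw [bdtd_succ]
  split_ifs with hm hp
  · obtain ⟨z, hz⟩ := hne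
    have hzpos : 0 < z.2 := (snd_ne_zero_of_mem_verts (hJ hz)).lt_or_gt.resolve_left
      fun h => (hm ▸ ⟨hz, h⟩ : z ∈ (∅ : Set (ℝ × ℝ)))
    obtain ⟨hc, hpos⟩ := isClosestToBase_leftmostLowest_pos hJ ⟨z, hz, hzpos⟩
    refine ⟨⟨hc, fun y hy hyt => ?_⟩, ⟨hc, fun _ _ _ => iff_true_intro hpos⟩⟩
    have hyneg : y.2 < 0 :=
      (snd_ne_zero_of_mem_verts (hJ hy)).lt_or_gt.resolve_right (hyt.not.mpr id)
    exact absurd (hm ▸ ⟨hy, hyneg⟩ : y ∈ (∅ : Set (ℝ × ℝ))) (notMem_empty y)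
  · obtain ⟨hc, hneg⟩ := isClosestToBase_leftmostLowest_neg hJ (nonempty_iff_ne_empty.mpr hm)
    refine ⟨⟨hc, fun _ _ _ => iff_false_intro hneg.not_gt⟩, ⟨hc, fun y hy hyt => ?_⟩⟩
    exact absurd (hp ▸ ⟨hy, hyt.mpr trivial⟩ : y ∈ (∅ : Set (ℝ × ℝ))) (notMem_empty y)
  · obtain ⟨hcm, hneg⟩ := isClosestToBase_leftmostLowest_neg hJ (nonempty_iff_ne_empty.mpr hm)
    obtain ⟨hcp, hpos⟩ := isClosestToBase_leftmostLowest_pos hJ (nonempty_iff_ne_empty.mpr hp)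
    exact ⟨⟨hcm, fun _ _ _ => iff_false_intro hneg.not_gt⟩,
      ⟨hcp, fun _ _ _ => iff_true_intro hpos⟩⟩

lemma isDominator_bdtd (s : ↥H.verts) : ∀ k,
    IsDominator False (H.Ipow s k) (H.bdtd s k).1 ∧ IsDominator True (H.Ipow s k) (H.bdtd s k).2
  | 0 => ⟨isDominator_singleton _, isDominator_singleton _⟩
  | k + 1 => isDominator_bdtd_succ s k
      ⟨_, Or.inl (mem_Iv_self (Ipow_subset_verts s k (isDominator_bdtd s k).1.1.1))⟩

lemma Ipow_subset_Iv_bdtd (s : ↥H.verts) : ∀ k,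
    H.Ipow s k ⊆ H.Iv (H.bdtd s k).1 ∧ H.Ipow s k ⊆ H.Iv (H.bdtd s k).2
  | 0 => ⟨singleton_subset_iff.mpr (mem_Iv_self s.2), singleton_subset_iff.mpr (mem_Iv_self s.2)⟩
  | k + 1 => by
    obtain ⟨hb, ht⟩ := isDominator_bdtd s k
    obtain ⟨hb', ht'⟩ := isDominator_bdtd s (k + 1)
    have hbV := Ipow_subset_verts s k hb.1.1
    have htV := Ipow_subset_verts s k ht.1.1
    have hc : (H.bdtd s k).1 ∈ H.Iv (H.bdtd s k).1 ∩ H.Iv (H.bdtd s k).2 :=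
      ⟨mem_Iv_self hbV, (Ipow_subset_Iv_bdtd s k).2 hb.1.1⟩
    exact ⟨union_Iv_subset_Iv hbV htV hc hb'.1, union_Iv_subset_Iv hbV htV hc ht'.1⟩

lemma Iv_subset_Ipow_succ (s : ↥H.verts) {j : ℕ} {v : ℝ × ℝ} (hv : v ∈ H.Ipow s j) :
    H.Iv v ⊆ H.Ipow s (j + 1) := by
  have hvV := Ipow_subset_verts s j hv
  obtain ⟨hb, ht⟩ := isDominator_bdtd s j
  obtain ⟨hbI, htI⟩ := Ipow_subset_Iv_bdtd s j
  by_cases hpos : 0 < v.2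
  · have hside := ht.iff_of_mem hv (iff_true_intro hpos)
    exact (Iv_subset_Iv (Ipow_subset_verts s j ht.1.1) hvV (htI hv) hside
      (ht.1.2 v hv hside.symm)).trans subset_union_right
  · have hside := hb.iff_of_mem hv (iff_false_intro hpos)
    exact (Iv_subset_Iv (Ipow_subset_verts s j hb.1.1) hvV (hbI hv) hside
      (hb.1.2 v hv hside.symm)).trans subset_union_left

lemma Ipow_mono (s : ↥H.verts) : Monotone (H.Ipow s) :=
  monotone_nat_of_le_succ fun j _ hv =>
    Iv_subset_Ipow_succ s hv (mem_Iv_self (Ipow_subset_verts s j hv))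

lemma mem_Ipow_length (s : ↥H.verts) {w : ↥H.verts} (p : H.visGraph.Walk w s) :
    (w : ℝ × ℝ) ∈ H.Ipow s p.length := by
  induction p with
  | nil => exact mem_singleton _
  | cons h _ ih =>
    exact Iv_subset_Ipow_succ _ ih (mem_Iv_of_covisible (Subtype.property _) h.symm.2)

lemma mem_Ipow_of_edist_le (s w : ↥H.verts) {j : ℕ} (h : H.visGraph.edist s w ≤ j) :
    (w : ℝ × ℝ) ∈ H.Ipow s j := by
  obtain ⟨p, hp⟩ := SimpleGraph.exists_walk_of_edist_ne_top (h.trans_lt (ENat.natCast_lt_top j)).ne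
  have hlen : p.reverse.length ≤ j := by
    rw [SimpleGraph.Walk.length_reverse]
    exact_mod_cast hp ▸ h
  exact Ipow_mono s hlen (mem_Ipow_length s p.reverse)

lemma edist_le_one_of_covisible {u w : ↥H.verts} (h : H.covisible u w) :
    H.visGraph.edist u w ≤ 1 := by
  rw [SimpleGraph.edist_le_one_iff_adj_or_eq]
  by_cases huw : u = w
  · exact Or.inr huw
  · exact Or.inl ⟨huw, h⟩

lemma edist_le_of_isClosestToBase (s : ↥H.verts) : ∀ (k : ℕ) (w : ↥H.verts),
    IsClosestToBase (H.Ipow s k) w → H.visGraph.edist s w ≤ k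
  | 0, w, hw => by rw [Subtype.ext hw.1, SimpleGraph.edist_self]; rfl
  | k + 1, w, hw => by
    obtain ⟨hb, ht⟩ := isDominator_bdtd s k
    suffices ∀ u, IsClosestToBase (H.Ipow s k) u → H.Iv u ⊆ H.Ipow s (k + 1) →
        (w : ℝ × ℝ) ∈ H.Iv u → H.visGraph.edist s w ≤ (k + 1 : ℕ) by
      rcases hw.1 with h | h
      exacts [this _ hb.1 subset_union_left h, this _ ht.1 subset_union_right h]
    intro u hu huI hwu
    let u' : ↥H.verts := ⟨u, Ipow_subset_verts s k hu.1⟩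
    calc H.visGraph.edist s w ≤ H.visGraph.edist s u' + H.visGraph.edist u' w :=
          SimpleGraph.edist_triangle
      _ ≤ k + 1 := add_le_add (edist_le_of_isClosestToBase s k u' hu)
          (edist_le_one_of_covisible (covisible_of_isClosestToBase u'.2 (hw.mono hwu huI)))
      _ = (k + 1 : ℕ) := by push_cast; rfl

lemma dist_eq_succ_of_isDominator {top : Prop} (s : ↥H.verts) (j : ℕ) {u u' : ℝ × ℝ}
    (hu : IsDominator top (H.Ipow s j) u) (hu' : IsDominator top (H.Ipow s (j + 1)) u')
    (huI : H.Iv u ⊆ H.Ipow s (j + 1)) (hne : H.Iv u ≠ H.verts) (w : ↥H.verts)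
    (hw : (w : ℝ × ℝ) = u') : H.visGraph.dist s w = j + 1 := by
  subst hw
  obtain ⟨b, hb, hbu, hlt⟩ := exists_closer_mem_Iv (Ipow_subset_verts s j hu.1.1) hne
  have hnew : (w : ℝ × ℝ) ∉ H.Ipow s j := hu.notMem_of_abs_lt hu' (huI hb) hbu hlt
  have hle : H.visGraph.edist s w ≤ (j + 1 : ℕ) := edist_le_of_isClosestToBase s (j + 1) w hu'.1
  have hgt : ¬H.visGraph.edist s w ≤ j := fun h => hnew (mem_Ipow_of_edist_le s w h)
  obtain ⟨n, hn⟩ := ENat.ne_top_iff_exists.mp (hle.trans_lt (ENat.natCast_lt_top _)).ne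
  rw [← hn] at hle hgt
  rw [SimpleGraph.dist, ← hn, ENat.toNat_natCast]
  norm_cast at hle hgt
  omega

end DoubleHistogram

/-- In a double histogram, for `k ≥ 1`: if `I(bd^{k−1}(s)) ≠ V(P)` then
`d(s, bd^k(s)) = k`, and if `I(td^{k−1}(s)) ≠ V(P)` then `d(s, td^k(s)) = k`. -/
theorem dominators_have_distance_k
    (H : DoubleHistogram) (k : ℕ) (hk : 1 ≤ k) (s : ↥H.verts) :
    (H.Iv (H.bdtd (s : ℝ × ℝ) (k - 1)).1 ≠ H.verts →
      ∀ w : ↥H.verts, (w : ℝ × ℝ) = (H.bdtd (s : ℝ × ℝ) k).1 →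
        H.visGraph.dist s w = k) ∧
    (H.Iv (H.bdtd (s : ℝ × ℝ) (k - 1)).2 ≠ H.verts →
      ∀ w : ↥H.verts, (w : ℝ × ℝ) = (H.bdtd (s : ℝ × ℝ) k).2 →
        H.visGraph.dist s w = k) := by
  obtain ⟨j, rfl⟩ : ∃ j, k = j + 1 := ⟨k - 1, by omega⟩
  rw [Nat.add_sub_cancel]
  obtain ⟨hb, ht⟩ := DoubleHistogram.isDominator_bdtd s j
  obtain ⟨hb', ht'⟩ := DoubleHistogram.isDominator_bdtd s (j + 1)
  exact ⟨DoubleHistogram.dist_eq_succ_of_isDominator s j hb hb' subset_union_left,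
    DoubleHistogram.dist_eq_succ_of_isDominator s j ht ht' subset_union_right⟩
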